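/- Let Γ be a distance-regular graph and Π = {C^{(1)},...,C^{(t)}} a completely regular partition with common intersection numbers γ_i, α_i, β_i (0 ≤ i ≤ ρ). Then the quotient graph Γ/Π is distance-regular of diameter ρ with intersection numbers b_i = β_i/γ_1 (0 ≤ i ≤ ρ−1), c_i = γ_i/γ_1 (1 ≤ i ≤ ρ), and a_i = (α_i − α_0)/γ_1; in particular c_1 = 1. -/

import Mathlib

open SimpleGraph

/-- The Hamming graph on `Fin n → Q`: words adjacent iff they differ in one coordinate. -/
def hammingGraph (n : ℕ) (Q : Type*) [DecidableEq Q] : SimpleGraph (Fin n → Q) where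
  Adj x y := hammingDist x y = 1
  symm := Std.Symm.mk fun x y h => by (try simp only at h ⊢); rwa [hammingDist_comm]
  loopless := Std.Irrefl.mk fun x h => by (try simp only at h); rw [hammingDist_self] at h; exact absurd h.symm one_ne_zero

/-- Distance from a vertex to a code, via graph distance. -/
noncomputable def distToCode {V : Type*} (G : SimpleGraph V) (C : Set V) (x : V) : ℕ :=
  sInf {d | ∃ c ∈ C, G.dist x c = d}

/-- The `i`-th cell of the distance partition of a code. -/
noncomputable def codeCell {V : Type*} (G : SimpleGraph V) (C : Set V) (i : ℕ) : Set V :=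
  {x | distToCode G C x = i}

/-- The number of neighbors of `x` lying in `S`. -/
noncomputable def nbrCount {V : Type*} (G : SimpleGraph V) (x : V) (S : Set V) : ℕ :=
  (G.neighborSet x ∩ S).ncard

/-- Covering radius of a code. -/
noncomputable def covRad {V : Type*} (G : SimpleGraph V) (C : Set V) : ℕ :=
  sSup {d | ∃ x, distToCode G C x = d}

/-- A code is completely regular if its distance partition is equitable. -/
def IsCompRegCode {V : Type*} (G : SimpleGraph V) (C : Set V) : Prop :=
  ∀ i j : ℕ, ∀ x ∈ codeCell G C i, ∀ y ∈ codeCell G C i,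
    nbrCount G x (codeCell G C j) = nbrCount G y (codeCell G C j)

/-- Intersection numbers `γ, α, β` of a code with covering radius `ρ`. -/
def HasIntNums {V : Type*} (G : SimpleGraph V) (C : Set V) (ρ : ℕ) (γ α β : ℕ → ℕ) : Prop :=
  γ 0 = 0 ∧ β ρ = 0 ∧
  ∀ i ≤ ρ, ∀ x ∈ codeCell G C i,
    (1 ≤ i → nbrCount G x (codeCell G C (i-1)) = γ i) ∧
    nbrCount G x (codeCell G C i) = α i ∧
    (i < ρ → nbrCount G x (codeCell G C (i+1)) = β i)

/-- Equitable partition of the vertex set of a graph. -/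
def IsEquitable {V : Type*} (G : SimpleGraph V) (Pa : Set (Set V)) : Prop :=
  ∀ P ∈ Pa, ∀ P' ∈ Pa, ∀ x ∈ P, ∀ y ∈ P, nbrCount G x P' = nbrCount G y P'

/-- Quotient graph of a graph by a partition of its vertex set. -/
def quotientGraph {V : Type*} (G : SimpleGraph V) (Pa : Set (Set V)) : SimpleGraph Pa where
  Adj P P' := P ≠ P' ∧ ∃ x ∈ (P : Set V), ∃ y ∈ (P' : Set V), G.Adj x y
  symm := ⟨by
    rintro P P' ⟨hne, x, hx, y, hy, hxy⟩
    exact ⟨hne.symm, y, hy, x, hx, hxy.symm⟩⟩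
  loopless := ⟨by rintro P ⟨hne, -⟩; exact hne rfl⟩

/-- Completely regular partition with common intersection numbers. -/
def IsCompRegPartition {V : Type*} (G : SimpleGraph V) (Pa : Set (Set V))
    (ρ : ℕ) (γ α β : ℕ → ℕ) : Prop :=
  Setoid.IsPartition Pa ∧ IsEquitable G Pa ∧
    ∀ P ∈ Pa, IsCompRegCode G P ∧ covRad G P = ρ ∧ HasIntNums G P ρ γ α β

/-- Distance-regular graph of diameter `D` with intersection arrays `b`, `c`. -/
def IsDistRegular {V : Type*} (G : SimpleGraph V) (D : ℕ) (b c : ℕ → ℕ) : Prop :=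
  G.Connected ∧ (∀ x y : V, G.dist x y ≤ D) ∧ (∃ x y : V, G.dist x y = D) ∧
  ∀ i ≤ D, ∀ x y : V, G.dist x y = i →
    (1 ≤ i → nbrCount G y {z | G.dist x z = i - 1} = c i) ∧
    (i < D → nbrCount G y {z | G.dist x z = i + 1} = b i)

/-- The tridiagonal quotient matrix of a completely regular code. -/
noncomputable def quotMatrix (ρ : ℕ) (γ α β : ℕ → ℕ) : Matrix (Fin (ρ+1)) (Fin (ρ+1)) ℝ :=
  Matrix.of fun i j =>
    if (j : ℕ) + 1 = (i : ℕ) then (γ (i : ℕ) : ℝ)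
    else if (i : ℕ) = (j : ℕ) then (α (i : ℕ) : ℝ)
    else if (i : ℕ) + 1 = (j : ℕ) then (β (i : ℕ) : ℝ)
    else 0

/-!
Fix a cell `P`. Equitability forces the distance to `P` to be constant on every cell: if `x`
has a neighbour `z` one step closer to `P`, every `y` in the cell of `x` has a neighbour in the
cell of `z`. Hence the cells at distance `j` from `P` in the quotient are exactly the cells
inside the `j`-th shell of `P`. A vertex `x` of a cell `P'` has either no neighbour or exactly
`γ 1` neighbours in any other cell `Q` (in the latter case `x` lies at distance one from the code
`Q`), and `α 0` neighbours in `P'`. Counting the neighbours of `x` in the shells `i - 1`, `i`,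
`i + 1` of `P` gives `γ i = γ 1 * c i`, `α i = α 0 + γ 1 * a i` and `β i = γ 1 * b i`.
-/

namespace SimpleGraph

variable {W : Type*} {H : SimpleGraph W} {f : W → ℕ}

lemma Walk.apply_le_apply_add_length (hf : ∀ u v, H.Adj u v → f v ≤ f u + 1) {u v : W}
    (w : H.Walk u v) : f v ≤ f u + w.length := by
  induction w with
  | nil => simp
  | cons h _ ih =>
    have := hf _ _ h
    rw [Walk.length_cons]
    omega

lemma reachable_and_dist_eq_of_descent {p : W} (hzero : ∀ u, f u = 0 ↔ u = p)
    (hf : ∀ u v, H.Adj u v → f v ≤ f u + 1)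
    (hdesc : ∀ u, 0 < f u → ∃ v, H.Adj u v ∧ f v + 1 = f u) (u : W) :
    H.Reachable p u ∧ H.dist p u = f u := by
  have hwalk : ∀ n, ∀ u, f u = n → ∃ w : H.Walk u p, w.length = n := by
    intro n
    induction n with
    | zero =>
      intro u hu
      obtain rfl := (hzero u).1 hu
      exact ⟨Walk.nil, rfl⟩
    | succ n ih =>
      intro u hu
      obtain ⟨v, huv, hv⟩ := hdesc u (by omega)
      obtain ⟨w, hw⟩ := ih v (by omega)
      exact ⟨Walk.cons huv w, by rw [Walk.length_cons, hw]⟩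
  obtain ⟨w, hw⟩ := hwalk _ u rfl
  have hreach : H.Reachable p u := ⟨w.reverse⟩
  refine ⟨hreach, le_antisymm ?_ ?_⟩
  · simpa [hw] using dist_le w.reverse
  · obtain ⟨w', hw'⟩ := hreach.exists_walk_length_eq_dist
    have := w'.apply_le_apply_add_length hf
    rw [(hzero p).2 rfl] at this
    omega

end SimpleGraph

section CodeDistance

variable {V : Type*} {G : SimpleGraph V} {C : Set V} {x y : V}

lemma distToCode_le_dist {c : V} (hc : c ∈ C) (x : V) : distToCode G C x ≤ G.dist x c :=
  Nat.sInf_le ⟨c, hc, rfl⟩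

lemma exists_mem_dist_eq_distToCode (hC : C.Nonempty) (x : V) :
    ∃ c ∈ C, G.dist x c = distToCode G C x :=
  Nat.sInf_mem (s := {d | ∃ c ∈ C, G.dist x c = d}) (hC.elim fun c hc => ⟨_, c, hc, rfl⟩)

lemma distToCode_eq_zero_iff (hconn : G.Connected) (hC : C.Nonempty) :
    distToCode G C x = 0 ↔ x ∈ C := by
  refine ⟨fun h => ?_, fun hx => by simpa using distToCode_le_dist (G := G) hx x⟩
  obtain ⟨c, hc, hxc⟩ := exists_mem_dist_eq_distToCode (G := G) hC x
  rw [h, hconn.dist_eq_zero_iff] at hxc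
  exact hxc ▸ hc

lemma codeCell_zero (hconn : G.Connected) (hC : C.Nonempty) : codeCell G C 0 = C :=
  Set.ext fun _ => distToCode_eq_zero_iff hconn hC

lemma distToCode_le_of_adj (hconn : G.Connected) (hC : C.Nonempty) (h : G.Adj x y) :
    distToCode G C x ≤ distToCode G C y + 1 := by
  obtain ⟨c, hc, hyc⟩ := exists_mem_dist_eq_distToCode (G := G) hC y
  calc distToCode G C x ≤ G.dist x c := distToCode_le_dist hc x
    _ ≤ G.dist x y + G.dist y c := hconn.dist_triangle
    _ = distToCode G C y + 1 := by rw [hyc, dist_eq_one_iff_adj.mpr h, add_comm]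

lemma exists_adj_distToCode_eq (hconn : G.Connected) (hC : C.Nonempty) {n : ℕ}
    (hx : distToCode G C x = n + 1) : ∃ z, G.Adj x z ∧ distToCode G C z = n := by
  obtain ⟨c, hc, hxc⟩ := exists_mem_dist_eq_distToCode (G := G) hC x
  obtain ⟨w, hw⟩ := (hconn x c).exists_walk_length_eq_dist
  cases w with
  | nil => simp_all
  | cons hxz w' =>
    refine ⟨_, hxz, le_antisymm ?_ ?_⟩
    · have := (distToCode_le_dist hc _).trans (dist_le w')
      rw [Walk.length_cons] at hw
      omega
    · have := distToCode_le_of_adj hconn hC hxz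
      omega

lemma HasIntNums.nbrCount_eq_alpha_zero {ρ : ℕ} {γ α β : ℕ → ℕ} (hC : HasIntNums G C ρ γ α β)
    (hconn : G.Connected) (hx : x ∈ C) : nbrCount G x C = α 0 := by
  have hx0 : x ∈ codeCell G C 0 := (distToCode_eq_zero_iff hconn ⟨x, hx⟩).2 hx
  rw [← codeCell_zero hconn ⟨x, hx⟩]
  exact (hC.2.2 0 (Nat.zero_le _) x hx0).2.1

lemma distToCode_le_covRad [Finite V] (x : V) : distToCode G C x ≤ covRad G C :=
  le_csSup (Set.finite_range (distToCode G C)).bddAbove ⟨x, rfl⟩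

lemma exists_distToCode_eq [Finite V] (hconn : G.Connected) (hC : C.Nonempty) {i : ℕ}
    (hi : i ≤ covRad G C) : ∃ x, distToCode G C x = i := by
  induction hi using Nat.decreasingInduction with
  | self =>
    obtain ⟨c, -⟩ := hC
    exact Nat.sSup_mem (s := Set.range (distToCode G C)) ⟨_, c, rfl⟩
      (Set.finite_range (distToCode G C)).bddAbove
  | of_succ k _ ih =>
    obtain ⟨x, hx⟩ := ih
    obtain ⟨z, -, hz⟩ := exists_adj_distToCode_eq hconn hC hx
    exact ⟨z, hz⟩

lemma nbrCount_pos_iff [Finite V] {S : Set V} :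
    0 < nbrCount G x S ↔ (G.neighborSet x ∩ S).Nonempty :=
  Set.ncard_pos (Set.toFinite _)

lemma HasIntNums.gamma_one_pos [Finite V] {ρ : ℕ} {γ α β : ℕ → ℕ}
    (hC : HasIntNums G C ρ γ α β) (hconn : G.Connected) (hCne : C.Nonempty)
    (hcr : covRad G C = ρ) (hρ : 1 ≤ ρ) : 0 < γ 1 := by
  obtain ⟨x, hx⟩ := exists_distToCode_eq hconn hCne (hcr ▸ hρ)
  obtain ⟨z, hxz, hz⟩ := exists_adj_distToCode_eq hconn hCne (n := 0) hx
  rw [← (hC.2.2 1 hρ x hx).1 le_rfl]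
  exact nbrCount_pos_iff.2 ⟨z, hxz, hz⟩

end CodeDistance

section EquitablePartition

variable {V : Type*} {G : SimpleGraph V} {Pa : Set (Set V)}

lemma IsEquitable.distToCode_le [Finite V] (heq : IsEquitable G Pa) (hconn : G.Connected)
    (hpart : Setoid.IsPartition Pa) {P Q : Set V} (hP : P ∈ Pa) (hQ : Q ∈ Pa) {x y : V}
    (hx : x ∈ Q) (hy : y ∈ Q) : distToCode G P y ≤ distToCode G P x := by
  have hPne := Setoid.nonempty_of_mem_partition hpart hP
  generalize hn : distToCode G P x = n
  induction n generalizing Q x y with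
  | zero =>
    rw [distToCode_eq_zero_iff hconn hPne] at hn
    obtain rfl : Q = P := (hpart.2 x).unique ⟨hQ, hx⟩ ⟨hP, hn⟩
    exact ((distToCode_eq_zero_iff hconn hPne).2 hy).le
  | succ n ih =>
    obtain ⟨z, hxz, hz⟩ := exists_adj_distToCode_eq hconn hPne hn
    obtain ⟨R, ⟨hR, hzR⟩, -⟩ := hpart.2 z
    have hyR : 0 < nbrCount G y R := by
      rw [heq Q hQ R hR y hy x hx]
      exact nbrCount_pos_iff.2 ⟨z, hxz, hzR⟩
    obtain ⟨z', hyz', hz'R⟩ := nbrCount_pos_iff.1 hyR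
    have := ih hR hzR hz'R hz
    have := distToCode_le_of_adj hconn hPne hyz'
    omega

lemma IsEquitable.distToCode_eq [Finite V] (heq : IsEquitable G Pa) (hconn : G.Connected)
    (hpart : Setoid.IsPartition Pa) {P Q : Set V} (hP : P ∈ Pa) (hQ : Q ∈ Pa) {x y : V}
    (hx : x ∈ Q) (hy : y ∈ Q) : distToCode G P x = distToCode G P y :=
  le_antisymm (heq.distToCode_le hconn hpart hP hQ hy hx)
    (heq.distToCode_le hconn hpart hP hQ hx hy)

lemma IsEquitable.reachable_and_dist_quotientGraph [Finite V] (heq : IsEquitable G Pa)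
    (hconn : G.Connected) (hpart : Setoid.IsPartition Pa) (P Q : Pa) {x : V}
    (hx : x ∈ (Q : Set V)) :
    (quotientGraph G Pa).Reachable P Q ∧ (quotientGraph G Pa).dist P Q = distToCode G P x := by
  have hne (R : Pa) : (R : Set V).Nonempty := Setoid.nonempty_of_mem_partition hpart R.2
  let f (R : Pa) : ℕ := distToCode G P (hne R).some
  have hf (R : Pa) {y : V} (hy : y ∈ (R : Set V)) : f R = distToCode G P y :=
    heq.distToCode_eq hconn hpart P.2 R.2 (hne R).some_mem hy
  rw [← hf Q hx]
  refine reachable_and_dist_eq_of_descent (fun R => ?_) ?_ (fun R hR => ?_) Q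
  · obtain ⟨y, hy⟩ := hne R
    rw [hf R hy, distToCode_eq_zero_iff hconn (hne P)]
    refine ⟨fun hyP => Subtype.ext ((hpart.2 y).unique ⟨R.2, hy⟩ ⟨P.2, hyP⟩), ?_⟩
    rintro rfl
    exact hy
  · rintro R R' ⟨-, a, ha, b, hb, hab⟩
    rw [hf R ha, hf R' hb]
    exact distToCode_le_of_adj hconn (hne P) hab.symm
  · obtain ⟨a, ha⟩ := hne R
    rw [hf R ha] at hR ⊢
    obtain ⟨z, haz, hz⟩ := exists_adj_distToCode_eq hconn (hne P)
      (x := a) (n := distToCode G P a - 1) (by omega)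
    obtain ⟨R', ⟨hR', hzR'⟩, -⟩ := hpart.2 z
    refine ⟨⟨R', hR'⟩, ⟨fun h => ?_, a, ha, z, hzR', haz⟩, by rw [hf ⟨R', hR'⟩ hzR']; omega⟩
    have := hf ⟨R', hR'⟩ hzR'
    rw [← h, hf R ha] at this
    omega

lemma IsEquitable.codeCell_eq_biUnion [Finite V] (heq : IsEquitable G Pa)
    (hconn : G.Connected) (hpart : Setoid.IsPartition Pa) (P : Pa) (j : ℕ) :
    codeCell G P j = ⋃ Q ∈ {Q : Pa | (quotientGraph G Pa).dist P Q = j}, (Q : Set V) := by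
  ext x
  obtain ⟨Q, ⟨hQ, hxQ⟩, -⟩ := hpart.2 x
  simp only [codeCell, Set.mem_ofPred_eq, Set.mem_iUnion, exists_prop]
  constructor
  · rintro rfl
    exact ⟨⟨Q, hQ⟩, (heq.reachable_and_dist_quotientGraph hconn hpart P ⟨Q, hQ⟩ hxQ).2, hxQ⟩
  · rintro ⟨R, rfl, hxR⟩
    exact (heq.reachable_and_dist_quotientGraph hconn hpart P R hxR).2.symm

end EquitablePartition

section IntersectionNumbers

variable {V : Type*} {G : SimpleGraph V} {Pa : Set (Set V)} {ρ : ℕ} {γ α β : ℕ → ℕ}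

lemma IsEquitable.nbrCount_cell_eq_of_adj (heq : IsEquitable G Pa) (hconn : G.Connected)
    (hpart : Setoid.IsPartition Pa) (hρ : 1 ≤ ρ) (hnums : ∀ P ∈ Pa, HasIntNums G P ρ γ α β)
    {P Q : Pa} (hPQ : (quotientGraph G Pa).Adj P Q) {x : V} (hx : x ∈ (P : Set V)) :
    nbrCount G x Q = γ 1 := by
  obtain ⟨hne, a, ha, b, hb, hab⟩ := hPQ
  have hQne : (Q : Set V).Nonempty := ⟨b, hb⟩
  have ha_one : distToCode G Q a = 1 := by
    have hle : distToCode G Q a ≤ 1 := dist_eq_one_iff_adj.2 hab ▸ distToCode_le_dist hb a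
    have hpos : distToCode G Q a ≠ 0 := fun h =>
      hne (Subtype.ext ((hpart.2 a).unique ⟨P.2, ha⟩
        ⟨Q.2, (distToCode_eq_zero_iff hconn hQne).1 h⟩))
    omega
  rw [heq P P.2 Q Q.2 x hx a ha, ← codeCell_zero hconn hQne]
  exact ((hnums Q Q.2).2.2 1 hρ a ha_one).1 le_rfl

variable [Finite V]

lemma IsEquitable.nbrCount_biUnion_of_notMem (heq : IsEquitable G Pa) (hconn : G.Connected)
    (hpart : Setoid.IsPartition Pa) (hρ : 1 ≤ ρ) (hnums : ∀ P ∈ Pa, HasIntNums G P ρ γ α β)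
    {P : Pa} {x : V} (hx : x ∈ (P : Set V)) {S : Set Pa} (hPS : P ∉ S) :
    nbrCount G x (⋃ Q ∈ S, (Q : Set V)) = γ 1 * nbrCount (quotientGraph G Pa) P S := by
  have hunion : G.neighborSet x ∩ ⋃ Q ∈ S, (Q : Set V) =
      ⋃ Q ∈ (quotientGraph G Pa).neighborSet P ∩ S, G.neighborSet x ∩ Q := by
    ext y
    simp only [Set.mem_inter_iff, Set.mem_iUnion, mem_neighborSet, exists_prop]
    constructor
    · rintro ⟨hxy, Q, hQ, hyQ⟩
      exact ⟨Q, ⟨⟨fun h => hPS (h ▸ hQ), x, hx, y, hyQ, hxy⟩, hQ⟩, hxy, hyQ⟩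
    · rintro ⟨Q, ⟨-, hQ⟩, hxy, hyQ⟩
      exact ⟨hxy, Q, hQ, hyQ⟩
  have hdisj : ((quotientGraph G Pa).neighborSet P ∩ S).PairwiseDisjoint
      fun Q : Pa => G.neighborSet x ∩ Q := fun Q _ R _ hQR =>
    (hpart.pairwiseDisjoint Q.2 R.2 (Subtype.coe_ne_coe.2 hQR)).mono
      Set.inter_subset_right Set.inter_subset_right
  rw [nbrCount, hunion, (Set.toFinite _).ncard_biUnion (fun _ _ => Set.toFinite _) hdisj]
  calc ∑ᶠ Q ∈ (quotientGraph G Pa).neighborSet P ∩ S, (G.neighborSet x ∩ Q).ncard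
      = ∑ᶠ Q ∈ (quotientGraph G Pa).neighborSet P ∩ S, γ 1 :=
        finsum_mem_congr rfl fun Q hQ => heq.nbrCount_cell_eq_of_adj hconn hpart hρ hnums hQ.1 hx
    _ = γ 1 * nbrCount (quotientGraph G Pa) P S := by
        rw [nbrCount, ← finsum_one, mul_finsum_mem' _ _ (Set.toFinite _), mul_one]

lemma IsEquitable.nbrCount_biUnion_of_mem (heq : IsEquitable G Pa) (hconn : G.Connected)
    (hpart : Setoid.IsPartition Pa) (hρ : 1 ≤ ρ) (hnums : ∀ P ∈ Pa, HasIntNums G P ρ γ α β)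
    {P : Pa} {x : V} (hx : x ∈ (P : Set V)) {S : Set Pa} (hPS : P ∈ S) :
    nbrCount G x (⋃ Q ∈ S, (Q : Set V)) = α 0 + γ 1 * nbrCount (quotientGraph G Pa) P S := by
  have hdisj : Disjoint (G.neighborSet x ∩ P) (G.neighborSet x ∩ ⋃ Q ∈ S \ {P}, (Q : Set V)) := by
    refine Set.disjoint_left.2 fun y ⟨_, hyP⟩ ⟨_, hyS⟩ => ?_
    obtain ⟨Q, ⟨-, hQP⟩, hyQ⟩ := Set.mem_iUnion₂.1 hyS
    exact hQP (Subtype.ext ((hpart.2 y).unique ⟨Q.2, hyQ⟩ ⟨P.2, hyP⟩))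
  have hloop : (quotientGraph G Pa).neighborSet P ∩ (S \ {P}) =
      (quotientGraph G Pa).neighborSet P ∩ S := by
    ext Q
    simp only [Set.mem_inter_iff, Set.mem_sdiff, Set.mem_singleton_iff, mem_neighborSet]
    exact ⟨fun h => ⟨h.1, h.2.1⟩, fun h => ⟨h.1, h.2, h.1.ne.symm⟩⟩
  have hsplit : ⋃ Q ∈ S, (Q : Set V) = (P : Set V) ∪ ⋃ Q ∈ S \ {P}, (Q : Set V) := by
    rw [← Set.biUnion_insert, Set.insert_sdiff_self_of_mem hPS]
  rw [hsplit, nbrCount,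
    Set.inter_union_distrib_left, Set.ncard_union_eq hdisj (Set.toFinite _) (Set.toFinite _)]
  rw [nbrCount, ← hloop]
  exact congrArg₂ (· + ·) ((hnums P P.2).nbrCount_eq_alpha_zero hconn hx)
    (heq.nbrCount_biUnion_of_notMem hconn hpart hρ hnums hx fun h => h.2 rfl)

end IntersectionNumbers

section QuotientGraph

variable {V : Type*} [Finite V] {G : SimpleGraph V} {Pa : Set (Set V)} {ρ : ℕ}
  {γ α β : ℕ → ℕ}

lemma IsEquitable.exists_quotientGraph_dist_eq (heq : IsEquitable G Pa) (hconn : G.Connected)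
    (hpart : Setoid.IsPartition Pa) (P : Pa) {i : ℕ} (hi : i ≤ covRad G P) :
    ∃ Q : Pa, (quotientGraph G Pa).dist P Q = i := by
  obtain ⟨x, hx⟩ :=
    exists_distToCode_eq hconn (Setoid.nonempty_of_mem_partition hpart P.2) hi
  obtain ⟨Q, ⟨hQ, hxQ⟩, -⟩ := hpart.2 x
  exact ⟨⟨Q, hQ⟩, (heq.reachable_and_dist_quotientGraph hconn hpart P ⟨Q, hQ⟩ hxQ).2.trans hx⟩

lemma IsEquitable.intersectionNumbers_eq_quotientGraph_nbrCount (heq : IsEquitable G Pa)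
    (hconn : G.Connected) (hpart : Setoid.IsPartition Pa) (hρ : 1 ≤ ρ)
    (hnums : ∀ P ∈ Pa, HasIntNums G P ρ γ α β) {P P' : Pa} {i : ℕ} (hi : i ≤ ρ)
    (hd : (quotientGraph G Pa).dist P P' = i) :
    (1 ≤ i → γ i = γ 1 *
      nbrCount (quotientGraph G Pa) P' {Q | (quotientGraph G Pa).dist P Q = i - 1}) ∧
    α i = α 0 + γ 1 *
      nbrCount (quotientGraph G Pa) P' {Q | (quotientGraph G Pa).dist P Q = i} ∧
    (i < ρ → β i = γ 1 *
      nbrCount (quotientGraph G Pa) P' {Q | (quotientGraph G Pa).dist P Q = i + 1}) := by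
  obtain ⟨x, hx⟩ := Setoid.nonempty_of_mem_partition hpart P'.2
  have hxi : x ∈ codeCell G P i :=
    (heq.reachable_and_dist_quotientGraph hconn hpart P P' hx).2.symm.trans hd
  obtain ⟨hγ, hα, hβ⟩ := (hnums P P.2).2.2 i hi x hxi
  simp only [heq.codeCell_eq_biUnion hconn hpart P] at hγ hα hβ
  refine ⟨fun h1 => ?_, ?_, fun hlt => ?_⟩
  · rw [← hγ h1, heq.nbrCount_biUnion_of_notMem hconn hpart hρ hnums hx]
    simp only [Set.mem_ofPred_eq, hd]
    omega
  · rw [← hα, heq.nbrCount_biUnion_of_mem hconn hpart hρ hnums hx hd]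
  · rw [← hβ hlt, heq.nbrCount_biUnion_of_notMem hconn hpart hρ hnums hx]
    simp only [Set.mem_ofPred_eq, hd]
    omega

lemma gamma_one_pos_of_isPartition (hconn : G.Connected) (hpart : Setoid.IsPartition Pa)
    (hρ : 1 ≤ ρ) (hnums : ∀ P ∈ Pa, HasIntNums G P ρ γ α β)
    (hcr : ∀ P ∈ Pa, covRad G P = ρ) : 0 < γ 1 := by
  obtain ⟨P, ⟨hP, -⟩, -⟩ := hpart.2 hconn.nonempty.some
  exact (hnums P hP).gamma_one_pos hconn (Setoid.nonempty_of_mem_partition hpart hP) (hcr P hP) hρ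

lemma IsEquitable.exists_intersectionNumbers_eq_mul (heq : IsEquitable G Pa)
    (hconn : G.Connected) (hpart : Setoid.IsPartition Pa) (hρ : 1 ≤ ρ)
    (hnums : ∀ P ∈ Pa, HasIntNums G P ρ γ α β) (hcr : ∀ P ∈ Pa, covRad G P = ρ) {i : ℕ}
    (hi : i ≤ ρ) : ∃ c a b : ℕ, γ i = γ 1 * c ∧ α i = α 0 + γ 1 * a ∧ β i = γ 1 * b := by
  obtain ⟨P, ⟨hP, -⟩, -⟩ := hpart.2 hconn.nonempty.some
  obtain ⟨P', hd⟩ := heq.exists_quotientGraph_dist_eq hconn hpart ⟨P, hP⟩ (i := i)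
    (by rw [hcr P hP]; exact hi)
  obtain ⟨hγ, hα, hβ⟩ :=
    heq.intersectionNumbers_eq_quotientGraph_nbrCount hconn hpart hρ hnums hi hd
  have hc : ∃ c, γ i = γ 1 * c := by
    rcases Nat.eq_zero_or_pos i with rfl | h1
    · exact ⟨0, (hnums P hP).1⟩
    · exact ⟨_, hγ h1⟩
  have hb : ∃ b, β i = γ 1 * b := by
    rcases hi.lt_or_eq with hlt | rfl
    · exact ⟨_, hβ hlt⟩
    · exact ⟨0, (hnums P hP).2.1⟩
  obtain ⟨c, hc⟩ := hc
  obtain ⟨b, hb⟩ := hb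
  exact ⟨c, _, b, hc, hα, hb⟩

theorem IsEquitable.isDistRegular_quotientGraph (heq : IsEquitable G Pa) (hconn : G.Connected)
    (hpart : Setoid.IsPartition Pa) (hρ : 1 ≤ ρ) (hnums : ∀ P ∈ Pa, HasIntNums G P ρ γ α β)
    (hcr : ∀ P ∈ Pa, covRad G P = ρ) :
    IsDistRegular (quotientGraph G Pa) ρ (fun i => β i / γ 1) (fun i => γ i / γ 1) := by
  have hγ := gamma_one_pos_of_isPartition hconn hpart hρ hnums hcr
  obtain ⟨P₀, ⟨hP₀, -⟩, -⟩ := hpart.2 hconn.nonempty.some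
  have hne (Q : Pa) : (Q : Set V).Nonempty := Setoid.nonempty_of_mem_partition hpart Q.2
  have : Nonempty Pa := ⟨⟨P₀, hP₀⟩⟩
  refine ⟨⟨fun P Q => (heq.reachable_and_dist_quotientGraph hconn hpart P Q (hne Q).some_mem).1⟩,
    fun P Q => ?_, ?_, fun i hi P P' hd => ?_⟩
  · rw [(heq.reachable_and_dist_quotientGraph hconn hpart P Q (hne Q).some_mem).2, ← hcr P P.2]
    exact distToCode_le_covRad _
  · obtain ⟨Q, hQ⟩ := heq.exists_quotientGraph_dist_eq hconn hpart ⟨P₀, hP₀⟩ (hcr P₀ hP₀).ge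
    exact ⟨_, Q, hQ⟩
  · obtain ⟨hγi, -, hβi⟩ :=
      heq.intersectionNumbers_eq_quotientGraph_nbrCount hconn hpart hρ hnums hi hd
    exact ⟨fun h1 => (Nat.div_eq_of_eq_mul_right hγ (hγi h1)).symm,
      fun hlt => (Nat.div_eq_of_eq_mul_right hγ (hβi hlt)).symm⟩

end QuotientGraph

/-- the quotient of a distance-regular graph by a completely regular
partition is distance-regular of diameter `ρ`, with `c_i = γ_i/γ_1`, `b_i = β_i/γ_1`,
`a_i = (α_i - α_0)/γ_1`, and in particular `c_1 = 1`. -/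
theorem quotient_is_distRegular {V : Type*} [Fintype V] (G : SimpleGraph V)
    (D : ℕ) (b0 c0 : ℕ → ℕ) (hDRG : IsDistRegular G D b0 c0)
    (Pa : Set (Set V)) (ρ : ℕ) (hρ : 1 ≤ ρ) (γ α β : ℕ → ℕ)
    (hPa : IsCompRegPartition G Pa ρ γ α β) :
    ∃ b c a : ℕ → ℕ,
      (∀ i ≤ ρ, γ 1 * c i = γ i ∧ γ 1 * b i = β i ∧ γ 1 * a i + α 0 = α i) ∧
      c 1 = 1 ∧
      IsDistRegular (quotientGraph G Pa) ρ b c := by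
  obtain ⟨hconn, -⟩ := hDRG
  obtain ⟨hpart, heq, hcells⟩ := hPa
  have hcr : ∀ P ∈ Pa, covRad G P = ρ := fun P hP => (hcells P hP).2.1
  have hnums : ∀ P ∈ Pa, HasIntNums G P ρ γ α β := fun P hP => (hcells P hP).2.2
  have hγ := gamma_one_pos_of_isPartition hconn hpart hρ hnums hcr
  refine ⟨fun i => β i / γ 1, fun i => γ i / γ 1, fun i => (α i - α 0) / γ 1, fun i hi => ?_,
    Nat.div_self hγ, heq.isDistRegular_quotientGraph hconn hpart hρ hnums hcr⟩
  obtain ⟨c, a, b, hc, ha, hb⟩ := heq.exists_intersectionNumbers_eq_mul hconn hpart hρ hnums hcr hi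
  simp [hc, ha, hb, Nat.mul_div_cancel_left _ hγ, add_comm]
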